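/- arXiv:2309.00869 — 2 statements merged into one kernel-verified Lean document; each statement's English description precedes it below -/
import Mathlib

section
/- Let U = (H_{a₁}⊗H_{b₁}) ∘ (CNOT_{a₁→s_A}⊗CNOT_{b₁→s_B}) ∘ (CNOT_{s_A→a₂}⊗CNOT_{s_B→b₂}) act on the six-qubit state |φ⁺⟩_{a₁b₁}⊗|φ⁺⟩_{a₂b₂}⊗|Ψ⟩_{s_As_B}. Then for each Bell state |Ψ⟩, the output is |α_Ψ⟩_{a₁b₁}⊗|β_Ψ⟩_{a₂b₂}⊗|Ψ⟩_{s_As_B} where (α,β) = (φ⁺,φ⁺), (ψ⁺,φ⁺), (φ⁺,ψ⁺), (ψ⁺,ψ⁺) for Ψ = φ⁺, φ⁻, ψ⁺, ψ⁻ respectively; in particular the target Bell state is unchanged and the four ancilla outcomes are pairwise orthogonal. -/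
/-- Amplitudes of the Bell state `|φ⁺⟩ = (|00⟩ + |11⟩)/√2`. -/
noncomputable def phiP : Fin 2 → Fin 2 → ℂ := fun a b =>
  if a = b then (Real.sqrt 2 : ℂ)⁻¹ else 0

/-- Amplitudes of the Bell state `|φ⁻⟩ = (|00⟩ - |11⟩)/√2`. -/
noncomputable def phiM : Fin 2 → Fin 2 → ℂ := fun a b =>
  if a = 0 ∧ b = 0 then (Real.sqrt 2 : ℂ)⁻¹
  else if a = 1 ∧ b = 1 then -(Real.sqrt 2 : ℂ)⁻¹ else 0

/-- Amplitudes of the Bell state `|ψ⁺⟩ = (|01⟩ + |10⟩)/√2`. -/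
noncomputable def psiP : Fin 2 → Fin 2 → ℂ := fun a b =>
  if a ≠ b then (Real.sqrt 2 : ℂ)⁻¹ else 0

/-- Amplitudes of the Bell state `|ψ⁻⟩ = (|01⟩ - |10⟩)/√2`. -/
noncomputable def psiM : Fin 2 → Fin 2 → ℂ := fun a b =>
  if a = 0 ∧ b = 1 then (Real.sqrt 2 : ℂ)⁻¹
  else if a = 1 ∧ b = 0 then -(Real.sqrt 2 : ℂ)⁻¹ else 0

/-- A pure `n`-qubit state, given by its amplitudes on computational basis states. -/
def QState (n : ℕ) := (Fin n → Fin 2) → ℂ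

/-- The CNOT gate with control qubit `c` and target qubit `t`,
`CNOT_{c→t} = |0⟩⟨0|_c ⊗ I_t + |1⟩⟨1|_c ⊗ X_t`. -/
def CNOT {n : ℕ} (c t : Fin n) (ψ : QState n) : QState n :=
  fun f => ψ (Function.update f t (f t + f c))

/-- The Hadamard gate `H = (1/√2)[[1,1],[1,-1]]` acting on qubit `k`. -/
noncomputable def Had {n : ℕ} (k : Fin n) (ψ : QState n) : QState n :=
  fun f => (Real.sqrt 2 : ℂ)⁻¹ *
    (ψ (Function.update f k 0) + (if f k = 1 then -1 else 1) * ψ (Function.update f k 1))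

/-- The discrimination circuit
`U = (H_{a₁} ⊗ H_{b₁}) ∘ (CNOT_{a₁→s_A} ⊗ CNOT_{b₁→s_B}) ∘ (CNOT_{s_A→a₂} ⊗ CNOT_{s_B→b₂})`,
with qubit ordering `(a₁, b₁, a₂, b₂, s_A, s_B) = (0,1,2,3,4,5)`. -/
noncomputable def circuit (ψ : QState 6) : QState 6 :=
  Had 0 (Had 1 (CNOT 0 4 (CNOT 1 5 (CNOT 4 2 (CNOT 5 3 ψ)))))

/-- Input state `|φ⁺⟩_{a₁b₁} ⊗ |φ⁺⟩_{a₂b₂} ⊗ |Ψ⟩_{s_As_B}`. -/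
noncomputable def inState (Ψ : Fin 2 → Fin 2 → ℂ) : QState 6 :=
  fun f => phiP (f 0) (f 1) * phiP (f 2) (f 3) * Ψ (f 4) (f 5)

/-- State `|α⟩_{a₁b₁} ⊗ |β⟩_{a₂b₂} ⊗ |Ψ⟩_{s_As_B}`. -/
noncomputable def outState (α β Ψ : Fin 2 → Fin 2 → ℂ) : QState 6 :=
  fun f => α (f 0) (f 1) * β (f 2) (f 3) * Ψ (f 4) (f 5)

/-- Ancilla four-qubit state `|α⟩_{a₁b₁} ⊗ |β⟩_{a₂b₂}`. -/
noncomputable def anc (α β : Fin 2 → Fin 2 → ℂ) :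
    (Fin 2 × Fin 2) × (Fin 2 × Fin 2) → ℂ :=
  fun p => α p.1.1 p.1.2 * β p.2.1 p.2.2

/-- The ancilla outcome states for the four Bell inputs `φ⁺, φ⁻, ψ⁺, ψ⁻`. -/
noncomputable def ancOut : Fin 4 → ((Fin 2 × Fin 2) × (Fin 2 × Fin 2) → ℂ) :=
  ![anc phiP phiP, anc psiP phiP, anc phiP psiP, anc psiP psiP]

/-!
The Bell states are the joint eigenvectors of `X ⊗ X` (eigenvalue `ε = ±1`) and `Z ⊗ Z`
(eigenvalue `(-1)^p`, i.e. support on the basis states of parity `p`). The CNOTs from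
`s_A, s_B` into the pair `(a₂, b₂)` act there as `X^{s_A} ⊗ X^{s_B}`, which on `φ⁺` equals
`X^{s_A + s_B} = X^p` on `b₂`: the parity is copied, giving `φ⁺` or `ψ⁺`. The CNOTs from `(a₁, b₁)`
into the target act on it as `(X ⊗ X)^{a₁}`, whose eigenvalue `ε^{a₁}` is kicked back onto `φ⁺`,
giving `φ⁺` or `φ⁻`; then `H ⊗ H` maps these to `φ⁺` or `ψ⁺`. The target is never changed, and
the four ancilla outcomes are orthogonal because `φ⁺ ⊥ ψ⁺`.
-/

def SupportedOnParity (p : Fin 2) (Ψ : Fin 2 → Fin 2 → ℂ) : Prop :=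
  ∀ s t, s + t ≠ p → Ψ s t = 0

def IsXXEigenstate (ε : ℂ) (Ψ : Fin 2 → Fin 2 → ℂ) : Prop :=
  ∀ s t, Ψ (s + 1) (t + 1) = ε * Ψ s t

lemma IsXXEigenstate.apply_add_add {ε : ℂ} {Ψ : Fin 2 → Fin 2 → ℂ} (hΨ : IsXXEigenstate ε Ψ)
    (s t a : Fin 2) : Ψ (s + a) (t + a) = (if a = 1 then ε else 1) * Ψ s t := by
  fin_cases a
  · simp
  · exact hΨ s t

/-- `H ⊗ H` on a two-qubit amplitude function. -/
noncomputable def hadPair (α : Fin 2 → Fin 2 → ℂ) : Fin 2 → Fin 2 → ℂ := fun a b =>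
  (Real.sqrt 2 : ℂ)⁻¹ *
    ((Real.sqrt 2 : ℂ)⁻¹ * (α 0 0 + (if b = 1 then -1 else 1) * α 0 1) +
      (if a = 1 then -1 else 1) *
        ((Real.sqrt 2 : ℂ)⁻¹ * (α 1 0 + (if b = 1 then -1 else 1) * α 1 1)))

lemma inv_sqrt_two_mul_self : (Real.sqrt 2 : ℂ)⁻¹ * (Real.sqrt 2 : ℂ)⁻¹ = 2⁻¹ := by
  rw [← mul_inv, ← Complex.ofReal_mul, Real.mul_self_sqrt zero_le_two]
  norm_num

lemma phiP_add_add (a b s t : Fin 2) : phiP (a + s) (b + t) = phiP a (b + (s + t)) := by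
  have : a + s = b + t ↔ a = b + (s + t) := by revert a b s t; decide
  simp only [phiP, this]

lemma phiP_add_one : (fun a b => phiP a (b + 1)) = psiP := by
  funext a b
  fin_cases a <;> fin_cases b <;> simp [phiP, psiP]

lemma sign_mul_phiP_neg_one :
    (fun a b => (if a = 1 then (-1 : ℂ) else 1) * phiP a b) = phiM := by
  funext a b
  fin_cases a <;> fin_cases b <;> simp [phiP, phiM]

lemma hadPair_phiP : hadPair phiP = phiP := by
  funext a b
  fin_cases a <;> fin_cases b <;> norm_num [hadPair, phiP, inv_sqrt_two_mul_self]

lemma hadPair_phiM : hadPair phiM = psiP := by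
  funext a b
  fin_cases a <;> fin_cases b <;> norm_num [hadPair, phiM, psiP, inv_sqrt_two_mul_self]

lemma had_had_outState (α β Ψ : Fin 2 → Fin 2 → ℂ) :
    Had 0 (Had 1 (outState α β Ψ)) = outState (hadPair α) β Ψ := by
  funext f
  simp only [Had, outState, hadPair, Function.update_apply, Fin.isValue, Fin.reduceEq, if_true,
    if_false]
  ring

lemma cnot_sA_a2_cnot_sB_b2_outState {p : Fin 2} {Ψ : Fin 2 → Fin 2 → ℂ}
    (α : Fin 2 → Fin 2 → ℂ) (hΨ : SupportedOnParity p Ψ) :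
    CNOT 4 2 (CNOT 5 3 (outState α phiP Ψ)) = outState α (fun a b => phiP a (b + p)) Ψ := by
  funext f
  simp only [CNOT, outState, Function.update_apply, Fin.isValue, Fin.reduceEq, if_true,
    if_false]
  rw [phiP_add_add]
  by_cases h : f 4 + f 5 = p
  · rw [h]
  · simp only [hΨ _ _ h, mul_zero]

lemma cnot_a1_sA_cnot_b1_sB_outState {ε : ℂ} {Ψ : Fin 2 → Fin 2 → ℂ} (β : Fin 2 → Fin 2 → ℂ)
    (hΨ : IsXXEigenstate ε Ψ) :
    CNOT 0 4 (CNOT 1 5 (outState phiP β Ψ)) =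
      outState (fun a b => (if a = 1 then ε else 1) * phiP a b) β Ψ := by
  funext f
  simp only [CNOT, outState, Function.update_apply, Fin.isValue, Fin.reduceEq, if_true, if_false]
  by_cases h : f 0 = f 1
  · rw [← h, hΨ.apply_add_add]
    ring
  · simp only [phiP, h, if_false, mul_zero, zero_mul]

lemma inState_eq_outState (Ψ : Fin 2 → Fin 2 → ℂ) : inState Ψ = outState phiP phiP Ψ := rfl

lemma circuit_inState {p : Fin 2} {ε : ℂ} {Ψ : Fin 2 → Fin 2 → ℂ}
    (hZZ : SupportedOnParity p Ψ) (hXX : IsXXEigenstate ε Ψ) :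
    circuit (inState Ψ) =
      outState (hadPair fun a b => (if a = 1 then ε else 1) * phiP a b)
        (fun a b => phiP a (b + p)) Ψ := by
  rw [circuit, inState_eq_outState, cnot_sA_a2_cnot_sB_b2_outState _ hZZ, cnot_a1_sA_cnot_b1_sB_outState _ hXX,
    had_had_outState]

lemma phiP_supportedOnParity : SupportedOnParity 0 phiP := by
  intro s t h; fin_cases s <;> fin_cases t <;> simp_all [phiP]

lemma phiM_supportedOnParity : SupportedOnParity 0 phiM := by
  intro s t h; fin_cases s <;> fin_cases t <;> simp_all [phiM]

lemma psiP_supportedOnParity : SupportedOnParity 1 psiP := by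
  intro s t h; fin_cases s <;> fin_cases t <;> simp_all [psiP]

lemma psiM_supportedOnParity : SupportedOnParity 1 psiM := by
  intro s t h; fin_cases s <;> fin_cases t <;> simp_all [psiM]

lemma phiP_isXXEigenstate : IsXXEigenstate 1 phiP := by
  intro s t; fin_cases s <;> fin_cases t <;> simp [phiP]

lemma phiM_isXXEigenstate : IsXXEigenstate (-1) phiM := by
  intro s t; fin_cases s <;> fin_cases t <;> simp [phiM]

lemma psiP_isXXEigenstate : IsXXEigenstate 1 psiP := by
  intro s t; fin_cases s <;> fin_cases t <;> simp [psiP]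

lemma psiM_isXXEigenstate : IsXXEigenstate (-1) psiM := by
  intro s t; fin_cases s <;> fin_cases t <;> simp [psiM]

lemma sum_star_anc_mul_anc (α β α' β' : Fin 2 → Fin 2 → ℂ) :
    ∑ p, star (anc α β p) * anc α' β' p =
      (∑ q : Fin 2 × Fin 2, star (α q.1 q.2) * α' q.1 q.2) *
        ∑ q : Fin 2 × Fin 2, star (β q.1 q.2) * β' q.1 q.2 := by
  rw [Finset.sum_mul_sum, ← Fintype.sum_prod_type']
  refine Finset.sum_congr rfl fun p _ => ?_
  simp only [anc, star_mul']
  ring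

lemma sum_star_phiP_mul_psiP : ∑ q : Fin 2 × Fin 2, star (phiP q.1 q.2) * psiP q.1 q.2 = 0 := by
  simp [Fintype.sum_prod_type, phiP, psiP]

lemma sum_star_psiP_mul_phiP : ∑ q : Fin 2 × Fin 2, star (psiP q.1 q.2) * phiP q.1 q.2 = 0 := by
  simp [Fintype.sum_prod_type, phiP, psiP]

lemma ancOut_orthogonal (i j : Fin 4) (hij : i ≠ j) :
    ∑ p, star (ancOut i p) * ancOut j p = 0 := by
  fin_cases i <;> fin_cases j <;>
    simp only [ancOut, Fin.mk_one, Fin.isValue, Fin.reduceFinMk, Matrix.cons_val,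
      Matrix.cons_val_zero, Matrix.cons_val_one, sum_star_anc_mul_anc, sum_star_phiP_mul_psiP,
      sum_star_psiP_mul_phiP, zero_mul, mul_zero] at hij ⊢ <;>
    exact absurd rfl hij

/-- The circuit maps each Bell input `|Ψ⟩` to `|α_Ψ⟩|β_Ψ⟩|Ψ⟩` with
`(α,β) = (φ⁺,φ⁺), (ψ⁺,φ⁺), (φ⁺,ψ⁺), (ψ⁺,ψ⁺)` for `Ψ = φ⁺, φ⁻, ψ⁺, ψ⁻`:
the target Bell state is unchanged and the four ancilla outcomes are
pairwise orthogonal. -/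
theorem circuit_discriminates_bell_states :
    circuit (inState phiP) = outState phiP phiP phiP ∧
    circuit (inState phiM) = outState psiP phiP phiM ∧
    circuit (inState psiP) = outState phiP psiP psiP ∧
    circuit (inState psiM) = outState psiP psiP psiM ∧
    ∀ i j : Fin 4, i ≠ j →
      (∑ p : (Fin 2 × Fin 2) × (Fin 2 × Fin 2), star (ancOut i p) * ancOut j p) = 0 := by
  refine ⟨?_, ?_, ?_, ?_, ancOut_orthogonal⟩
  · simp only [circuit_inState phiP_supportedOnParity phiP_isXXEigenstate, ite_self, one_mul,
      hadPair_phiP, add_zero]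
  · simp only [circuit_inState phiM_supportedOnParity phiM_isXXEigenstate, sign_mul_phiP_neg_one,
      hadPair_phiM, add_zero]
  · simp only [circuit_inState psiP_supportedOnParity psiP_isXXEigenstate, ite_self, one_mul,
      hadPair_phiP, phiP_add_one]
  · rw [circuit_inState psiM_supportedOnParity psiM_isXXEigenstate, sign_mul_phiP_neg_one,
      hadPair_phiM, phiP_add_one]
end

section
/- In the nondestructive Bell discrimination circuit with maximally entangled ancilla, measuring the four ancilla qubits a₁b₁a₂b₂ in the computational basis gives, for input Bell state |φ⁺⟩, nonzero probability only on outcomes {0000, 0011, 1100, 1111}, each with probability 1/4. -/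
/-- The final state for input Bell state `|φ⁺⟩_{s_As_B}` with ancillas
`|φ⁺⟩_{a₁b₁} ⊗ |φ⁺⟩_{a₂b₂}`. -/
noncomputable def finalState : QState 6 :=
  circuit (fun f => phiP (f 0) (f 1) * phiP (f 2) (f 3) * phiP (f 4) (f 5))

/-- Basis assignment on the six qubits given ancilla outcomes `x` on
`a₁,b₁,a₂,b₂` and system values `s` on `s_A,s_B`. -/
def assign (x : Fin 4 → Fin 2) (s : Fin 2 × Fin 2) : Fin 6 → Fin 2 :=
  fun i => if h : (i : ℕ) < 4 then x ⟨i, h⟩ else if (i : ℕ) = 4 then s.1 else s.2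

/-- Probability of observing ancilla outcome `x = (a₁,b₁,a₂,b₂)` when measuring
the four ancilla qubits of the final state in the computational basis. -/
noncomputable def outcomeProb (x : Fin 4 → Fin 2) : ℝ :=
  ∑ s : Fin 2 × Fin 2, Complex.normSq (finalState (assign x s))


/-!
The circuit fixes its input `|φ⁺⟩^{⊗3}`. Each CNOT of the first layer adds one bit to a
qubit, and on every basis state in the support the two qubits of each pair receive the same
bit, so the layer maps the support onto itself. Then `H ⊗ H` fixes `|φ⁺⟩_{a₁b₁}`. Hence the
ancillas `a₁b₁a₂b₂` are measured in the state `|φ⁺⟩ ⊗ |φ⁺⟩`.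
-/

theorem normSq_phiP (a b : Fin 2) :
    Complex.normSq (phiP a b) = if a = b then 1 / 2 else 0 := by
  unfold phiP
  split_ifs <;> simp

theorem sum_normSq_phiP : ∑ s : Fin 2 × Fin 2, Complex.normSq (phiP s.1 s.2) = 1 := by
  norm_num [Fintype.sum_prod_type, normSq_phiP]

theorem Had_Had_phiP_mul {n : ℕ} {k l : Fin n} (hkl : k ≠ l) (χ : QState n)
    (hχ : ∀ f u v, χ (Function.update (Function.update f k u) l v) = χ f) :
    Had k (Had l fun f => phiP (f k) (f l) * χ f) = fun f => phiP (f k) (f l) * χ f := by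
  funext f
  have half : (Real.sqrt 2 : ℂ)⁻¹ * (Real.sqrt 2 : ℂ)⁻¹ = 1 / 2 := by
    rw [← mul_inv, ← Complex.ofReal_mul, Real.mul_self_sqrt zero_le_two]; norm_num
  simp only [Had, Function.update_self, Function.update_of_ne hkl.symm,
    Function.update_of_ne hkl, hχ]
  generalize f k = a, f l = b
  fin_cases a <;> fin_cases b <;> simp [phiP] <;> linear_combination (2 * χ f) * half

theorem cnotLayer_apply (ψ : QState 6) (f : Fin 6 → Fin 2) :
    CNOT 0 4 (CNOT 1 5 (CNOT 4 2 (CNOT 5 3 ψ))) f =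
      ψ ![f 0, f 1, f 2 + f 4 + f 0, f 3 + f 5 + f 1, f 4 + f 0, f 5 + f 1] := by
  simp only [CNOT]
  congr 1
  funext i
  fin_cases i <;> simp [Function.update, add_assoc]

noncomputable def inputState : QState 6 :=
  fun f => phiP (f 0) (f 1) * phiP (f 2) (f 3) * phiP (f 4) (f 5)

theorem cnotLayer_inputState :
    CNOT 0 4 (CNOT 1 5 (CNOT 4 2 (CNOT 5 3 inputState))) = inputState := by
  funext f
  rw [cnotLayer_apply]
  by_cases h01 : f 0 = f 1 <;> by_cases h45 : f 4 = f 5 <;> simp [inputState, phiP, h01, h45]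

theorem finalState_eq_inputState : finalState = inputState := by
  change Had 0 (Had 1 (CNOT 0 4 (CNOT 1 5 (CNOT 4 2 (CNOT 5 3 inputState))))) = inputState
  rw [cnotLayer_inputState]
  have hsplit : inputState = fun f => phiP (f 0) (f 1) * (phiP (f 2) (f 3) * phiP (f 4) (f 5)) :=
    funext fun f => mul_assoc _ _ _
  rw [hsplit]
  exact Had_Had_phiP_mul (by decide) _ fun f u v => by simp [Function.update]

/-- For input `|φ⁺⟩`, the ancilla measurement gives nonzero probability only on
outcomes `0000, 0011, 1100, 1111` (i.e. `a₁ = b₁` and `a₂ = b₂`), each with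
probability `1/4`. -/
theorem outcomeProb_phiP (x : Fin 4 → Fin 2) :
    outcomeProb x = if x 0 = x 1 ∧ x 2 = x 3 then 1 / 4 else 0 := by
  have hfactor : outcomeProb x =
      Complex.normSq (phiP (x 0) (x 1)) * Complex.normSq (phiP (x 2) (x 3)) *
        ∑ s : Fin 2 × Fin 2, Complex.normSq (phiP s.1 s.2) := by
    simp only [outcomeProb, finalState_eq_inputState, inputState, map_mul, Finset.mul_sum]
    rfl
  rw [hfactor, sum_normSq_phiP, normSq_phiP, normSq_phiP]
  split_ifs <;> simp_all; norm_num
end
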